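/- arXiv:1001.3286 — 2 statements merged into one kernel-verified Lean document; each statement's English description precedes it below -/
import Mathlib

section
/- Let K be a field, W a finite-dimensional K-linear subspace of K[[z_1,…,z_n]], and let F : ℤ → {K-subspaces of W} be a decreasing family (F_{η+1} ⊆ F_η for all η ∈ ℤ) with F_η = W for all sufficiently small η and F_η = {0} for all sufficiently large η. For each α in the finite set v(W∖{0}) := {v(f) : f ∈ W, f ≠ 0}, define G(α) := max{η ∈ ℤ : α = v(f) for some nonzero f ∈ F_η}. Then for every η ∈ ℤ one has dim_K F_η = card {α ∈ v(W∖{0}) : G(α) ≥ η}. -/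
/-- `α` is the lexicographic leading exponent (the lex-smallest multi-index with nonzero
coefficient) of the multivariate formal power series `f`. -/
def IsLexLeadExp {n : ℕ} {K : Type*} [CommRing K]
    (f : MvPowerSeries (Fin n) K) (α : Lex (Fin n →₀ ℕ)) : Prop :=
  IsLeast {β : Lex (Fin n →₀ ℕ) | MvPowerSeries.coeff (ofLex β) f ≠ 0} α

/-- The set `v(W∖{0})` of lexicographic leading exponents of nonzero elements of `W`. -/
def lexLeadExps {n : ℕ} {K : Type*} [CommRing K]
    (W : Submodule K (MvPowerSeries (Fin n) K)) : Set (Lex (Fin n →₀ ℕ)) :=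
  {α : Lex (Fin n →₀ ℕ) | ∃ f ∈ W, f ≠ 0 ∧ IsLexLeadExp f α}

/-!
Elements of `W` with distinct leading exponents are linearly independent (their
coefficient matrix is triangular), and a nonzero element of `W` has its leading coefficient
at an exponent of `lexLeadExps W`, so reading off the coefficients at those exponents is
injective on `W`. Together, `dim W = #lexLeadExps W` for every finite-dimensional `W`.
Applied to `F η`, it remains to note that `lexLeadExps (F η)` is exactly the set of
`α ∈ lexLeadExps W` with `η ≤ G α`, because the filtration is decreasing.
-/

open MvPowerSeries

section LeadingExponents

variable {n : ℕ} {K : Type*}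

lemma exists_isLexLeadExp [CommRing K] {f : MvPowerSeries (Fin n) K} (hf : f ≠ 0) :
    ∃ α, IsLexLeadExp f α := by
  have hne : {β : Lex (Fin n →₀ ℕ) | coeff (ofLex β) f ≠ 0}.Nonempty := by
    contrapose! hf
    ext d
    simpa using Set.eq_empty_iff_forall_notMem.1 hf (toLex d)
  exact ⟨wellFounded_lt.min _ hne, wellFounded_lt.min_mem _ hne,
    fun β hβ => wellFounded_lt.min_le hβ⟩

lemma IsLexLeadExp.coeff_eq_zero_of_lt [CommRing K] {f : MvPowerSeries (Fin n) K}
    {α β : Lex (Fin n →₀ ℕ)} (h : IsLexLeadExp f α) (hβ : β < α) : coeff (ofLex β) f = 0 :=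
  not_not.1 fun hc => (h.2 hc).not_gt hβ

lemma lexLeadExps_mono [CommRing K] {V W : Submodule K (MvPowerSeries (Fin n) K)}
    (h : V ≤ W) : lexLeadExps V ⊆ lexLeadExps W :=
  fun _ ⟨f, hf, hf0, hlead⟩ => ⟨f, h hf, hf0, hlead⟩

lemma linearIndependent_of_isLexLeadExp [CommRing K] [NoZeroDivisors K] {ι : Type*}
    {w : ι → MvPowerSeries (Fin n) K} {e : ι → Lex (Fin n →₀ ℕ)}
    (hw : ∀ i, IsLexLeadExp (w i) (e i)) (he : Function.Injective e) :
    LinearIndependent K w := by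
  classical
  rw [linearIndependent_iff']
  intro s g hsum i hi
  by_contra hgi
  obtain ⟨j, hj, hjmin⟩ := (s.filter (g · ≠ 0)).exists_min_image e ⟨i, by simp [hi, hgi]⟩
  rw [Finset.mem_filter] at hj
  -- All other terms of the sum vanish at the smallest leading exponent `e j`.
  have hcoeff : coeff (ofLex (e j)) (∑ k ∈ s, g k • w k) = g j * coeff (ofLex (e j)) (w j) := by
    rw [map_sum, Finset.sum_eq_single_of_mem j hj.1, map_smul, smul_eq_mul]
    intro k hk hkj
    by_cases hgk : g k = 0
    · simp [hgk]
    have hlt : e j < e k :=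
      (hjmin k (Finset.mem_filter.2 ⟨hk, hgk⟩)).lt_of_ne (he.ne (Ne.symm hkj))
    rw [map_smul, (hw k).coeff_eq_zero_of_lt hlt, smul_zero]
  rw [hsum, map_zero, eq_comm] at hcoeff
  exact mul_ne_zero hj.2 (hw j).1 hcoeff

lemma finrank_eq_ncard_lexLeadExps [Field K] (V : Submodule K (MvPowerSeries (Fin n) K))
    [FiniteDimensional K V] : Module.finrank K V = (lexLeadExps V).ncard := by
  have hwit : ∀ α : lexLeadExps V, ∃ f : V, IsLexLeadExp (f : MvPowerSeries (Fin n) K) α :=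
    fun ⟨_, f, hf, _, hlead⟩ => ⟨⟨f, hf⟩, hlead⟩
  choose w hw using hwit
  have hli : LinearIndependent K w :=
    .of_comp V.subtype (linearIndependent_of_isLexLeadExp hw Subtype.val_injective)
  have : Fintype (lexLeadExps V) := @Fintype.ofFinite _ hli.finite
  have hinj : Function.Injective
      (LinearMap.pi fun α : lexLeadExps V => (coeff (ofLex α.1)).comp V.subtype) := by
    rw [← LinearMap.ker_eq_bot, Submodule.eq_bot_iff]
    intro f hf
    by_contra hf0
    obtain ⟨α, hα⟩ := exists_isLexLeadExp (Subtype.coe_ne_coe.2 hf0)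
    exact hα.1 (congr_fun (LinearMap.mem_ker.1 hf) ⟨α, f, f.2, Subtype.coe_ne_coe.2 hf0, hα⟩)
  rw [Set.ncard_eq_toFinset_card', Set.toFinset_card]
  refine le_antisymm ?_ hli.fintype_card_le_finrank
  simpa using LinearMap.finrank_le_finrank_of_injective hinj

end LeadingExponents

theorem finrank_filtration_eq_card_lexLeadExps_general (n : ℕ) (K : Type*) [Field K]
    (W : Submodule K (MvPowerSeries (Fin n) K)) [FiniteDimensional K W]
    (F : ℤ → Submodule K (MvPowerSeries (Fin n) K))
    (hFW : ∀ η : ℤ, F η ≤ W)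
    (hFdec : ∀ η : ℤ, F (η + 1) ≤ F η)
    (G : Lex (Fin n →₀ ℕ) → ℤ)
    (hG : ∀ α ∈ lexLeadExps W,
      IsGreatest {η : ℤ | ∃ f ∈ F η, f ≠ 0 ∧ IsLexLeadExp f α} (G α)) :
    ∀ η : ℤ, Module.finrank K (F η) =
      Set.ncard {α ∈ lexLeadExps W | η ≤ G α} := by
  intro η
  have : FiniteDimensional K (F η) := Submodule.finiteDimensional_of_le (hFW η)
  have hanti : Antitone F := antitone_int_of_succ_le hFdec
  have hexps : {α ∈ lexLeadExps W | η ≤ G α} = lexLeadExps (F η) := by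
    ext α
    refine ⟨fun ⟨hαW, hη⟩ => ?_, fun hα => ?_⟩
    · obtain ⟨f, hf, hf0, hlead⟩ := (hG α hαW).1
      exact ⟨f, hanti hη hf, hf0, hlead⟩
    · have hαW := lexLeadExps_mono (hFW η) hα
      exact ⟨hαW, (hG α hαW).2 hα⟩
  rw [hexps, finrank_eq_ncard_lexLeadExps]

/-- Let `K` be a field, `W` a finite-dimensional subspace of `K[[z_1,…,z_n]]`, and
`F : ℤ → {subspaces of W}` a decreasing family with `F η = W` for `η ≪ 0` and `F η = 0`
for `η ≫ 0`. For `α ∈ v(W∖{0})` let `G α` be the largest `η` such that `α = v(f)` for some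
nonzero `f ∈ F η`. Then for every `η ∈ ℤ`,
`dim_K (F η) = card {α ∈ v(W∖{0}) : G α ≥ η}`. -/
theorem finrank_filtration_eq_card_lexLeadExps (n : ℕ) (hn : 1 ≤ n) (K : Type*) [Field K]
    (W : Submodule K (MvPowerSeries (Fin n) K)) [FiniteDimensional K W]
    (F : ℤ → Submodule K (MvPowerSeries (Fin n) K))
    (hFW : ∀ η : ℤ, F η ≤ W)
    (hFdec : ∀ η : ℤ, F (η + 1) ≤ F η)
    (hFleft : ∃ N : ℤ, ∀ η ≤ N, F η = W)
    (hFright : ∃ M : ℤ, ∀ η ≥ M, F η = ⊥)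
    (G : Lex (Fin n →₀ ℕ) → ℤ)
    (hG : ∀ α ∈ lexLeadExps W,
      IsGreatest {η : ℤ | ∃ f ∈ F η, f ≠ 0 ∧ IsLexLeadExp f α} (G α)) :
    ∀ η : ℤ, Module.finrank K (F η) =
      Set.ncard {α ∈ lexLeadExps W | η ≤ G α} :=
  finrank_filtration_eq_card_lexLeadExps_general n K W F hFW hFdec G hG
end

section
/- Let K be an integral domain, and for each k ∈ ℕ let W_k be a K-submodule of K[[z_1,…,z_n]] with W_k · W_m ⊆ W_{k+m}. Suppose that for each k we are given a decreasing family F^{(k)} : ℤ → {K-submodules of W_k} (F^{(k)}_{η+1} ⊆ F^{(k)}_η), with F^{(k)}_η = W_k for all sufficiently small η and F^{(k)}_η = {0} for all sufficiently large η, which is multiplicative in the sense that F^{(k)}_η · F^{(m)}_{η'} ⊆ F^{(k+m)}_{η+η'} for all k, m ∈ ℕ and η, η' ∈ ℤ. Define G_k(α) := max{η ∈ ℤ : α = v(f) for some nonzero f ∈ F^{(k)}_η} for α ∈ v(W_k∖{0}). Then for all k, m ∈ ℕ and all nonzero f ∈ W_k, g ∈ W_m, one has G_{k+m}(v(f) +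 v(g)) ≥ G_k(v(f)) + G_m(v(g)). -/
/-!
The leading exponent `v` is Mathlib's `MvPowerSeries.lexOrder`, which over a ring without zero
divisors is additive: `v(fg) = v(f) + v(g)`. If `f'` and `g'` realise `G k (v f)` and
`G m (v g)`, then by multiplicativity of the filtrations `f' g'` is a nonzero element of
`F (k+m) (G k (v f) + G m (v g))` with leading exponent `v f + v g`, so this level is at most
`G (k+m) (v f + v g)`.
-/

namespace IsLexLeadExp

open MvPowerSeries

variable {n : ℕ} {K : Type*} [CommRing K]

theorem iff_lexOrder_eq {f : MvPowerSeries (Fin n) K} {α : Lex (Fin n →₀ ℕ)} :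
    IsLexLeadExp f α ↔ lexOrder f = α := by
  constructor
  · intro hf
    refine le_antisymm (lexOrder_le_of_coeff_ne_zero hf.1) (le_lexOrder_iff.2 fun d hd => ?_)
    by_contra hd0
    exact (WithTop.coe_lt_coe.1 hd).not_ge (hf.2 hd0)
  · intro hf
    exact ⟨coeff_ne_zero_of_lexOrder hf.symm, fun β hβ =>
      WithTop.coe_le_coe.1 (hf ▸ lexOrder_le_of_coeff_ne_zero hβ)⟩

theorem ne_zero {f : MvPowerSeries (Fin n) K} {α : Lex (Fin n →₀ ℕ)}
    (hf : IsLexLeadExp f α) : f ≠ 0 := by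
  rintro rfl
  exact hf.1 (map_zero _)

theorem mul [NoZeroDivisors K] {f g : MvPowerSeries (Fin n) K} {α β : Lex (Fin n →₀ ℕ)}
    (hf : IsLexLeadExp f α) (hg : IsLexLeadExp g β) : IsLexLeadExp (f * g) (α + β) := by
  rw [iff_lexOrder_eq] at *
  rw [lexOrder_mul, hf, hg, WithTop.coe_add]

end IsLexLeadExp

theorem concave_transform_superadditive_general (n : ℕ) (K : Type*)
    [CommRing K] [IsDomain K]
    (W : ℕ → Submodule K (MvPowerSeries (Fin n) K))
    (F : ℕ → ℤ → Submodule K (MvPowerSeries (Fin n) K))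
    (hFW : ∀ k : ℕ, ∀ η : ℤ, F k η ≤ W k)
    (hFmul : ∀ k m : ℕ, ∀ η η' : ℤ, ∀ f ∈ F k η, ∀ g ∈ F m η',
      f * g ∈ F (k + m) (η + η'))
    (G : ℕ → Lex (Fin n →₀ ℕ) → ℤ)
    (hG : ∀ k : ℕ, ∀ α ∈ lexLeadExps (W k),
      IsGreatest {η : ℤ | ∃ f ∈ F k η, f ≠ 0 ∧ IsLexLeadExp f α} (G k α)) :
    ∀ k m : ℕ, ∀ f ∈ W k, f ≠ 0 → ∀ g ∈ W m, g ≠ 0 →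
      ∀ vf vg : Lex (Fin n →₀ ℕ), IsLexLeadExp f vf → IsLexLeadExp g vg →
        G k vf + G m vg ≤ G (k + m) (toLex (ofLex vf + ofLex vg)) := by
  intro k m f hfW hfne g hgW hgne vf vg hvf hvg
  obtain ⟨f', hf'F, -, hf'lead⟩ := (hG k vf ⟨f, hfW, hfne, hvf⟩).1
  obtain ⟨g', hg'F, -, hg'lead⟩ := (hG m vg ⟨g, hgW, hgne, hvg⟩).1
  have hlead : IsLexLeadExp (f' * g') (vf + vg) := hf'lead.mul hg'lead
  have hmem : f' * g' ∈ F (k + m) (G k vf + G m vg) := hFmul k m _ _ f' hf'F g' hg'F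
  exact (hG (k + m) _ ⟨f' * g', hFW _ _ hmem, hlead.ne_zero, hlead⟩).2
    ⟨f' * g', hmem, hlead.ne_zero, hlead⟩

/-- Let `K` be an integral domain, `W k` submodules of `K[[z_1,…,z_n]]` with
`W k · W m ⊆ W (k+m)`, and for each `k` a decreasing, left- and right-bounded family
`F k : ℤ → {submodules of W k}` which is multiplicative:
`F k η · F m η' ⊆ F (k+m) (η+η')`. With `G k α` the largest `η` such that `α = v(f)` for
some nonzero `f ∈ F k η`, one has for all nonzero `f ∈ W k`, `g ∈ W m` the
superadditivity `G (k+m) (v(f)+v(g)) ≥ G k (v(f)) + G m (v(g))`. -/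
theorem concave_transform_superadditive (n : ℕ) (hn : 1 ≤ n) (K : Type*)
    [CommRing K] [IsDomain K]
    (W : ℕ → Submodule K (MvPowerSeries (Fin n) K))
    (hW : ∀ k m : ℕ, ∀ f ∈ W k, ∀ g ∈ W m, f * g ∈ W (k + m))
    (F : ℕ → ℤ → Submodule K (MvPowerSeries (Fin n) K))
    (hFW : ∀ k : ℕ, ∀ η : ℤ, F k η ≤ W k)
    (hFdec : ∀ k : ℕ, ∀ η : ℤ, F k (η + 1) ≤ F k η)
    (hFleft : ∀ k : ℕ, ∃ N : ℤ, ∀ η ≤ N, F k η = W k)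
    (hFright : ∀ k : ℕ, ∃ M : ℤ, ∀ η ≥ M, F k η = ⊥)
    (hFmul : ∀ k m : ℕ, ∀ η η' : ℤ, ∀ f ∈ F k η, ∀ g ∈ F m η',
      f * g ∈ F (k + m) (η + η'))
    (G : ℕ → Lex (Fin n →₀ ℕ) → ℤ)
    (hG : ∀ k : ℕ, ∀ α ∈ lexLeadExps (W k),
      IsGreatest {η : ℤ | ∃ f ∈ F k η, f ≠ 0 ∧ IsLexLeadExp f α} (G k α)) :
    ∀ k m : ℕ, ∀ f ∈ W k, f ≠ 0 → ∀ g ∈ W m, g ≠ 0 →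
      ∀ vf vg : Lex (Fin n →₀ ℕ), IsLexLeadExp f vf → IsLexLeadExp g vg →
        G k vf + G m vg ≤ G (k + m) (toLex (ofLex vf + ofLex vg)) :=
  concave_transform_superadditive_general n K W F hFW hFmul G hG
end
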